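/- arXiv:1903.03403 — 2 statements merged into one kernel-verified Lean document; each statement's English description precedes it below -/
import Mathlib

section
/- If T is a bounded linear operator on a complex Hilbert space with T² = 0, then w(T) = (1/2)·√(‖TT* + T*T‖). -/
/-!
Since `T² = 0`, `(T + T*)² = TT* + T*T`, so by the C*-identity `√‖TT* + T*T‖ = ‖T + T*‖`. The chain
`‖T‖ ≤ ‖T + T*‖ ≤ 2 w(T) ≤ ‖T‖` then closes: the first inequality because `T*T ≤ TT* + T*T`, the
second because `T + T*` is self-adjoint with `⟨(T + T*)x, x⟩ = 2 Re ⟨Tx, x⟩`, and the third by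
splitting `x = y + z` with `y ∈ ker T`, `z ⊥ ker T`: as `Tz ∈ ker T`, `⟨Tx, x⟩ = ⟨Tz, y⟩`, whose modulus
is at most `‖T‖ ‖y‖ ‖z‖ ≤ ‖T‖ ‖x‖² / 2`.
-/

open Complex

variable {H : Type*} [NormedAddCommGroup H] [InnerProductSpace ℂ H] [CompleteSpace H]

/-- The numerical radius `w(T) = sup {|⟨Tx,x⟩| : ‖x‖ = 1}`. -/
noncomputable def numRadius (T : H →L[ℂ] H) : ℝ :=
  sSup {r : ℝ | ∃ x : H, ‖x‖ = 1 ∧ r = ‖(inner ℂ (T x) x : ℂ)‖}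

/-- The Crawford number `m(T) = inf {|⟨Tx,x⟩| : ‖x‖ = 1}`. -/
noncomputable def crawford (T : H →L[ℂ] H) : ℝ :=
  sInf {r : ℝ | ∃ x : H, ‖x‖ = 1 ∧ r = ‖(inner ℂ (T x) x : ℂ)‖}

/-- The real part `Re(T) = (T + T*)/2`. -/
noncomputable def reOp (T : H →L[ℂ] H) : H →L[ℂ] H := (2 : ℂ)⁻¹ • (T + star T)

/-- The imaginary part `Im(T) = (T - T*)/(2i)`. -/
noncomputable def imOp (T : H →L[ℂ] H) : H →L[ℂ] H := (2 * Complex.I)⁻¹ • (T - star T)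

section NumericalRadius

variable {E : Type*} [NormedAddCommGroup E] [InnerProductSpace ℂ E]

lemma numRadius_nonneg (T : E →L[ℂ] E) : 0 ≤ numRadius T :=
  Real.sSup_nonneg (by rintro r ⟨x, -, rfl⟩; exact norm_nonneg _)

lemma norm_inner_le_numRadius (T : E →L[ℂ] E) {x : E} (hx : ‖x‖ = 1) :
    ‖inner ℂ (T x) x‖ ≤ numRadius T := by
  refine le_csSup ⟨‖T‖, ?_⟩ ⟨x, hx, rfl⟩
  rintro r ⟨y, hy, rfl⟩
  calc ‖inner ℂ (T y) y‖ ≤ ‖T y‖ * ‖y‖ := norm_inner_le_norm _ _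
    _ ≤ ‖T‖ := by simpa [hy] using T.le_opNorm y

end NumericalRadius

lemma add_star_sq_of_sq_eq_zero {R : Type*} [Ring R] [StarRing R] {a : R} (ha : a ^ 2 = 0) :
    (a + star a) ^ 2 = a * star a + star a * a := by
  have ha' : star a ^ 2 = 0 := by rw [← star_pow, ha, star_zero]
  rw [sq] at ha ha'
  rw [sq, add_mul, mul_add, mul_add, ha, ha']
  abel

lemma norm_mul_star_add_star_mul_of_sq_eq_zero {A : Type*} [NormedRing A] [StarRing A]
    [CStarRing A] {a : A} (ha : a ^ 2 = 0) :
    ‖a * star a + star a * a‖ = ‖a + star a‖ ^ 2 := by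
  have hsa : star (a + star a) = a + star a := by rw [star_add, star_star, add_comm]
  rw [← add_star_sq_of_sq_eq_zero ha, sq, sq, ← CStarRing.norm_star_mul_self, hsa]

lemma sq_norm_le_norm_mul_star_add_star_mul {A : Type*} [NonUnitalCStarAlgebra A] [PartialOrder A]
    [StarOrderedRing A] (a : A) : ‖a‖ ^ 2 ≤ ‖a * star a + star a * a‖ := by
  rw [sq, ← CStarRing.norm_star_mul_self]
  exact CStarAlgebra.norm_le_norm_of_nonneg_of_le (star_mul_self_nonneg a)
    (le_add_of_nonneg_left (mul_star_self_nonneg a))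

lemma norm_add_star_le_two_mul_numRadius (T : H →L[ℂ] H) : ‖T + star T‖ ≤ 2 * numRadius T := by
  have hsymm : (↑(T + star T) : H →ₗ[ℂ] H).IsSymmetric :=
    (IsSelfAdjoint.add_star_self T).isSymmetric
  rw [ContinuousLinearMap.norm_eq_iSup_rayleighQuotient _ hsymm]
  refine ciSup_le fun x => ?_
  rcases eq_or_ne x 0 with rfl | hx
  · simpa using mul_nonneg zero_le_two (numRadius_nonneg T)
  have hnx : (‖x‖⁻¹ : ℂ) ≠ 0 := by simpa using hx
  set u : H := (‖x‖⁻¹ : ℂ) • x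
  have hu : ‖u‖ = 1 := norm_smul_inv_norm hx
  have hre : re (inner ℂ ((T + star T) u) u) = 2 * re (inner ℂ (T u) u) := by
    rw [add_apply, inner_add_left, ContinuousLinearMap.star_eq_adjoint,
      ContinuousLinearMap.adjoint_inner_left, ← inner_conj_symm, add_re, conj_re]
    ring
  rw [← ContinuousLinearMap.rayleigh_smul _ x hnx, ContinuousLinearMap.rayleighQuotient,
    ContinuousLinearMap.reApplyInnerSelf_apply, hu, one_pow, div_one]
  calc |RCLike.re (inner ℂ ((T + star T) u) u)| = 2 * |re (inner ℂ (T u) u)| := by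
        rw [RCLike.re_to_complex, hre, abs_mul, abs_two]
    _ ≤ 2 * numRadius T := by
        gcongr
        exact (abs_re_le_norm _).trans (norm_inner_le_numRadius T hu)

lemma norm_inner_apply_self_le_of_sq_eq_zero {T : H →L[ℂ] H} (h : T ^ 2 = 0) (x : H) :
    ‖inner ℂ (T x) x‖ ≤ ‖T‖ / 2 * ‖x‖ ^ 2 := by
  obtain ⟨y, hy, z, hz, rfl⟩ := T.ker.exists_add_mem_mem_orthogonal x
  have hTy : T y = 0 := hy
  have hTz : T z ∈ T.ker := by simpa [sq] using congr($h z)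
  have hinner : inner ℂ (T (y + z)) (y + z) = inner ℂ (T z) y := by
    rw [map_add, hTy, zero_add, inner_add_right, hz _ hTz, add_zero]
  have hpyth : ‖y + z‖ ^ 2 = ‖y‖ ^ 2 + ‖z‖ ^ 2 := by
    simpa only [sq] using norm_add_sq_eq_norm_sq_add_norm_sq_of_inner_eq_zero y z
      (Submodule.inner_right_of_mem_orthogonal hy hz)
  rw [hinner, hpyth]
  calc ‖inner ℂ (T z) y‖ ≤ ‖T‖ * ‖z‖ * ‖y‖ :=
        (norm_inner_le_norm _ _).trans (by gcongr; exact T.le_opNorm z)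
    _ ≤ ‖T‖ / 2 * (‖y‖ ^ 2 + ‖z‖ ^ 2) := by
        nlinarith [norm_nonneg T, sq_nonneg (‖y‖ - ‖z‖)]

lemma numRadius_le_half_norm_of_sq_eq_zero {T : H →L[ℂ] H} (h : T ^ 2 = 0) :
    numRadius T ≤ ‖T‖ / 2 := by
  refine Real.sSup_le ?_ (by positivity)
  rintro r ⟨x, hx, rfl⟩
  simpa [hx] using norm_inner_apply_self_le_of_sq_eq_zero h x

theorem stmt2 (T : H →L[ℂ] H) (h : T ^ 2 = 0) :
    numRadius T = (1/2) * Real.sqrt ‖T * star T + star T * T‖ := by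
  have hupper := numRadius_le_half_norm_of_sq_eq_zero h
  have hre := norm_add_star_le_two_mul_numRadius T
  have hsq := norm_mul_star_add_star_mul_of_sq_eq_zero h
  have hlower : ‖T‖ ≤ ‖T + star T‖ := by
    have := sq_norm_le_norm_mul_star_add_star_mul T
    rw [hsq] at this
    exact pow_le_pow_iff_left₀ (norm_nonneg _) (norm_nonneg _) two_ne_zero |>.mp this
  rw [hsq, Real.sqrt_sq (norm_nonneg _)]
  linarith
end

section
/- For a bounded linear operator T on a complex Hilbert space, w(T) ≤ inf over real φ of √(‖Re(e^{iφ}T)‖² + ‖Re(e^{i(φ+π/2)}T)‖²). -/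
open Complex

variable {H : Type*} [NormedAddCommGroup H] [InnerProductSpace ℂ H] [CompleteSpace H]

/-! For a unit vector `x`, the number `z = ⟪(e^{iφ} T) x, x⟫` has the same modulus as `⟪T x, x⟫`.
Since `⟪Re(S) x, x⟫ = Re ⟪S x, x⟫`, the real part of `z` is bounded by `‖Re(e^{iφ} T)‖`, and its
imaginary part, which is up to sign the real part of `⟪(i e^{iφ} T) x, x⟫`, by
`‖Re(e^{i(φ+π/2)} T)‖`. -/

open scoped ComplexConjugate InnerProductSpace

lemma inner_reOp_apply_self (S : H →L[ℂ] H) (x : H) :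
    ⟪reOp S x, x⟫_ℂ = ((⟪S x, x⟫_ℂ).re : ℂ) := by
  simp only [reOp, smul_apply, add_apply, inner_smul_left, inner_add_left,
    ContinuousLinearMap.star_eq_adjoint, ContinuousLinearMap.adjoint_inner_left,
    ← inner_conj_symm x (S x), Complex.add_conj]
  simp [map_inv₀, map_ofNat]

lemma abs_re_inner_apply_self_le (S : H →L[ℂ] H) (x : H) :
    |(⟪S x, x⟫_ℂ).re| ≤ ‖reOp S‖ * ‖x‖ ^ 2 :=
  calc |(⟪S x, x⟫_ℂ).re| = ‖⟪reOp S x, x⟫_ℂ‖ := by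
        rw [inner_reOp_apply_self, norm_real, Real.norm_eq_abs]
    _ ≤ ‖reOp S x‖ * ‖x‖ := norm_inner_le_norm _ _
    _ ≤ ‖reOp S‖ * ‖x‖ * ‖x‖ := by gcongr; exact (reOp S).le_opNorm x
    _ = ‖reOp S‖ * ‖x‖ ^ 2 := by ring

lemma Complex.norm_le_sqrt_of_abs_re_le_of_abs_im_le {z : ℂ} {a b : ℝ} (ha : |z.re| ≤ a)
    (hb : |z.im| ≤ b) : ‖z‖ ≤ √(a ^ 2 + b ^ 2) := by
  rw [Complex.norm_eq_sqrt_sq_add_sq, ← sq_abs z.re, ← sq_abs z.im]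
  gcongr

lemma Complex.exp_add_pi_div_two_mul_I (φ : ℝ) :
    exp (((φ + Real.pi / 2 : ℝ) : ℂ) * I) = exp (φ * I) * I := by
  push_cast
  rw [add_mul, exp_add, exp_pi_div_two_mul_I]

lemma norm_inner_apply_self_le_sqrt (T : H →L[ℂ] H) (φ : ℝ) {x : H} (hx : ‖x‖ = 1) :
    ‖⟪T x, x⟫_ℂ‖ ≤ √(‖reOp (exp (φ * I) • T)‖ ^ 2
      + ‖reOp (exp (((φ + Real.pi / 2 : ℝ) : ℂ) * I) • T)‖ ^ 2) := by
  set z := conj (exp (φ * I)) * ⟪T x, x⟫_ℂ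
  have hre : (⟪(exp (φ * I) • T) x, x⟫_ℂ).re = z.re := by rw [smul_apply, inner_smul_left]
  have him : (⟪(exp (((φ + Real.pi / 2 : ℝ) : ℂ) * I) • T) x, x⟫_ℂ).re = z.im := by
    rw [smul_apply, inner_smul_left, exp_add_pi_div_two_mul_I, map_mul, conj_I, mul_right_comm]
    simp [z]
  have hnorm : ‖⟪T x, x⟫_ℂ‖ = ‖z‖ := by
    rw [norm_mul, RCLike.norm_conj, norm_exp_ofReal_mul_I, one_mul]
  rw [hnorm]
  apply norm_le_sqrt_of_abs_re_le_of_abs_im_le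
  · simpa only [hre, hx, one_pow, mul_one] using abs_re_inner_apply_self_le (exp (φ * I) • T) x
  · simpa only [him, hx, one_pow, mul_one] using
      abs_re_inner_apply_self_le (exp (((φ + Real.pi / 2 : ℝ) : ℂ) * I) • T) x

theorem stmt5 (T : H →L[ℂ] H) :
    numRadius T ≤
      ⨅ φ : ℝ, Real.sqrt (‖reOp (Complex.exp (φ * Complex.I) • T)‖ ^ 2
        + ‖reOp (Complex.exp (((φ + Real.pi / 2 : ℝ) : ℂ) * Complex.I) • T)‖ ^ 2) := by
  refine le_ciInf fun φ ↦ Real.sSup_le ?_ (Real.sqrt_nonneg _)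
  rintro r ⟨x, hx, rfl⟩
  exact norm_inner_apply_self_le_sqrt T φ hx
end
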